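/- Five points in the projective plane, no three of which are collinear, determine a unique conic passing through all of them. -/

import Mathlib

/-!
Ternary quadratic forms make up a 6-dimensional space, and vanishing at a point is one linear
condition on it. The five conditions are independent: for each point, the pair of lines joining
the other four in two pairs vanishes at those four but, by general position, not at the point
itself. So the conics through the five points form a 1-dimensional space.
-/

open Module QuadraticMap Matrix

lemma LinearMap.range_eq_top_of_single_mem {R M η : Type*} [Semiring R] [AddCommMonoid M]
    [Module R M] [Finite η] [DecidableEq η] {f : M →ₗ[R] η → R}
    (h : ∀ i, Pi.single i 1 ∈ range f) : range f = ⊤ := by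
  rw [eq_top_iff, ← (Pi.basisFun R η).span_eq, Submodule.span_le]
  rintro _ ⟨i, rfl⟩
  simpa using h i

lemma Submodule.exists_smul_eq_of_finrank_eq_one {K V : Type*} [Field K] [AddCommGroup V]
    [Module K V] {S : Submodule K V} (hS : finrank K S = 1) {v w : V} (hv : v ∈ S)
    (hv0 : v ≠ 0) (hw : w ∈ S) (hw0 : w ≠ 0) : ∃ c : K, c ≠ 0 ∧ w = c • v := by
  have hv0' : (⟨v, hv⟩ : S) ≠ 0 := by simpa using hv0
  obtain ⟨c, hc⟩ := (finrank_eq_one_iff_of_nonzero' _ hv0').mp hS ⟨w, hw⟩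
  have hcw : c • v = w := congrArg Subtype.val hc
  refine ⟨c, ?_, hcw.symm⟩
  rintro rfl
  exact hw0 (by simpa using hcw.symm)

namespace QuadraticMap

variable {ι R M : Type*} [CommRing R] [AddCommGroup M] [Module R M]

variable (R) in
def evalAt {κ : Type*} (p : κ → M) : QuadraticForm R M →ₗ[R] κ → R where
  toFun Q i := Q (p i)
  map_add' _ _ := rfl
  map_smul' _ _ := rfl

@[simp]
lemma mem_ker_evalAt {κ : Type*} (p : κ → M) (Q : QuadraticForm R M) :
    Q ∈ LinearMap.ker (evalAt R p) ↔ ∀ i, Q (p i) = 0 := by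
  simp [evalAt, funext_iff]

noncomputable def sym2Monomial (bm : Basis ι R M) : Sym2 ι → QuadraticForm R M :=
  Sym2.lift ⟨fun i j => linMulLin (bm.coord i) (bm.coord j), fun i j => by
    ext x; simp [linMulLin_apply, mul_comm]⟩

@[simp]
lemma sym2Monomial_mk (bm : Basis ι R M) (i j : ι) :
    sym2Monomial bm s(i, j) = linMulLin (bm.coord i) (bm.coord j) := rfl

variable [DecidableEq ι]

/-- The coefficient of `x_i x_j` is `Q (bm i)` on the diagonal and `polar Q (bm i) (bm j)` off
it; unlike `associated`, this needs no division by `2`, so it works in characteristic two. -/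
noncomputable def sym2Coeffs (bm : Basis ι R M) : QuadraticForm R M →ₗ[R] Sym2 ι → R where
  toFun Q := Sym2.lift ⟨fun i j => if i = j then Q (bm i) else polar Q (bm i) (bm j), by
    intro i j
    by_cases h : i = j
    · subst h; rfl
    · simp [h, Ne.symm h, polar_comm]⟩
  map_add' Q Q' := by
    funext z
    induction z using Sym2.ind with
    | _ i j => by_cases h : i = j <;> simp [h, polar_add]
  map_smul' c Q := by
    funext z
    induction z using Sym2.ind with
    | _ i j => by_cases h : i = j <;> simp [h, polar_smul]

@[simp]
lemma sym2Coeffs_mk (bm : Basis ι R M) (Q : QuadraticForm R M) (i j : ι) :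
    sym2Coeffs bm Q s(i, j) = if i = j then Q (bm i) else polar Q (bm i) (bm j) := rfl

lemma sym2Coeffs_sym2Monomial (bm : Basis ι R M) (z : Sym2 ι) :
    sym2Coeffs bm (sym2Monomial bm z) = Pi.single z 1 := by
  funext w
  induction z using Sym2.ind with | _ a b =>
  induction w using Sym2.ind with | _ i j =>
  by_cases h : i = j
  · subst h
    simp only [sym2Monomial_mk, sym2Coeffs_mk, ↓reduceIte, linMulLin_apply, Basis.coord_apply,
      Basis.repr_self, Finsupp.single_apply, Pi.single_apply, Sym2.eq, Sym2.rel_iff',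
      Prod.mk.injEq, Prod.swap_prod_mk]
    split_ifs <;> simp_all
  · simp only [sym2Monomial_mk, sym2Coeffs_mk, h, ↓reduceIte, polar, linMulLin_apply,
      Basis.coord_apply, map_add, Basis.repr_self, Finsupp.single_apply, Pi.single_apply,
      Sym2.eq, Sym2.rel_iff', Prod.mk.injEq, Prod.swap_prod_mk]
    split_ifs <;> simp_all

lemma sym2Coeffs_injective (bm : Basis ι R M) : Function.Injective (sym2Coeffs bm) := by
  let : LinearOrder ι := IsWellOrder.linearOrder WellOrderingRel
  rw [← LinearMap.ker_eq_bot, LinearMap.ker_eq_bot']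
  intro Q hQ
  have hB : Q.toBilin bm = 0 := by
    refine bm.ext fun i => bm.ext fun j => ?_
    have := congrFun hQ s(i, j)
    rw [toBilin_apply]
    by_cases h : i = j <;> simp_all
  rw [← toQuadraticMap_toBilin Q bm, hB, LinearMap.BilinMap.toQuadraticMap_zero]

variable [Fintype ι]

noncomputable def sym2CoeffsEquiv (bm : Basis ι R M) : QuadraticForm R M ≃ₗ[R] (Sym2 ι → R) :=
  LinearEquiv.ofBijective (sym2Coeffs bm) ⟨sym2Coeffs_injective bm,
    LinearMap.range_eq_top.mp <| LinearMap.range_eq_top_of_single_mem fun z =>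
      ⟨sym2Monomial bm z, sym2Coeffs_sym2Monomial bm z⟩⟩

end QuadraticMap

namespace QuadraticForm

variable {R M : Type*} [CommRing R] [AddCommGroup M] [Module R M] [Module.Free R M]
  [Module.Finite R M]

instance : Module.Finite R (QuadraticForm R M) := by
  classical exact Module.Finite.equiv (sym2CoeffsEquiv (Module.Free.chooseBasis R M)).symm

theorem finrank_eq_choose [Nontrivial R] :
    finrank R (QuadraticForm R M) = (finrank R M + 1).choose 2 := by
  classical
  rw [(sym2CoeffsEquiv (Module.Free.chooseBasis R M)).finrank_eq, finrank_fintype_fun_eq_card,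
    Sym2.card, Module.finrank_eq_card_chooseBasisIndex]

end QuadraticForm

section Conics

variable {k : Type*} [Field k]

lemma triple_product_ne_zero_of_linearIndependent {u v w : Fin 3 → k}
    (h : LinearIndependent k ![u, v, w]) : u ⬝ᵥ v ⨯₃ w ≠ 0 := by
  rw [triple_product_eq_det]
  exact ((isUnit_iff_isUnit_det _).mp (linearIndependent_rows_iff_isUnit.mp h)).ne_zero

noncomputable def linePair (a b c d : Fin 3 → k) : QuadraticForm k (Fin 3 → k) :=
  linMulLin (dotProductBilin k k (a ⨯₃ b)) (dotProductBilin k k (c ⨯₃ d))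

lemma linePair_apply (a b c d x : Fin 3 → k) :
    linePair a b c d x = (x ⬝ᵥ a ⨯₃ b) * (x ⬝ᵥ c ⨯₃ d) := by
  simp [linePair, linMulLin_apply, dotProduct_comm]

variable {p : Fin 5 → Fin 3 → k}

lemma exists_quadraticForm_ne_zero_eq_zero_off
    (hgen : ∀ i j l : Fin 5, i ≠ j → i ≠ l → j ≠ l → LinearIndependent k ![p i, p j, p l])
    (i : Fin 5) : ∃ Q : QuadraticForm k (Fin 3 → k), Q (p i) ≠ 0 ∧ ∀ j ≠ i, Q (p j) = 0 := by
  set q := fun m => p (i.succAbove m)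
  have hline : ∀ m m' : Fin 4, m ≠ m' → p i ⬝ᵥ q m ⨯₃ q m' ≠ 0 := fun m m' hm =>
    triple_product_ne_zero_of_linearIndependent <| hgen _ _ _ (i.succAbove_ne m).symm
      (i.succAbove_ne m').symm (Fin.succAbove_right_injective.ne hm)
  refine ⟨linePair (q 0) (q 1) (q 2) (q 3), ?_, fun j hj => ?_⟩
  · rw [linePair_apply]
    exact mul_ne_zero (hline 0 1 (by decide)) (hline 2 3 (by decide))
  · obtain ⟨m, rfl⟩ := Fin.exists_succAbove_eq hj
    fin_cases m <;> simp [q, linePair_apply, dot_self_cross, dot_cross_self]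

lemma range_evalAt_eq_top
    (hgen : ∀ i j l : Fin 5, i ≠ j → i ≠ l → j ≠ l → LinearIndependent k ![p i, p j, p l]) :
    LinearMap.range (evalAt k p) = ⊤ := by
  refine LinearMap.range_eq_top_of_single_mem fun i => ?_
  obtain ⟨Q, hQi, hQj⟩ := exists_quadraticForm_ne_zero_eq_zero_off hgen i
  refine ⟨(Q (p i))⁻¹ • Q, funext fun j => ?_⟩
  by_cases hj : j = i
  · subst hj
    simp [evalAt, hQi]
  · simp [evalAt, hj, hQj j hj]

lemma finrank_ker_evalAt_eq_one
    (hgen : ∀ i j l : Fin 5, i ≠ j → i ≠ l → j ≠ l → LinearIndependent k ![p i, p j, p l]) :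
    finrank k (LinearMap.ker (evalAt k p)) = 1 := by
  have h := LinearMap.finrank_range_add_finrank_ker (evalAt k p)
  rw [range_evalAt_eq_top hgen, finrank_top, finrank_fin_fun, QuadraticForm.finrank_eq_choose,
    finrank_fin_fun] at h
  have h6 : (3 + 1).choose 2 = 6 := rfl
  omega

end Conics

theorem five_points_determine_a_conic_general
    (k : Type*) [Field k]
    (p : Fin 5 → (Fin 3 → k))
    (hgen : ∀ i j l : Fin 5, i ≠ j → i ≠ l → j ≠ l →
      LinearIndependent k ![p i, p j, p l]) :
    (∃ Q : QuadraticForm k (Fin 3 → k), Q ≠ 0 ∧ ∀ i, Q (p i) = 0) ∧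
    (∀ Q Q' : QuadraticForm k (Fin 3 → k),
      Q ≠ 0 → (∀ i, Q (p i) = 0) → Q' ≠ 0 → (∀ i, Q' (p i) = 0) →
      ∃ c : k, c ≠ 0 ∧ Q' = c • Q) := by
  have hker := finrank_ker_evalAt_eq_one hgen
  obtain ⟨Q, hQ, hQ0⟩ := Submodule.exists_mem_ne_zero_of_ne_bot <|
    Submodule.one_le_finrank_iff.mp hker.ge
  refine ⟨⟨Q, hQ0, (mem_ker_evalAt p Q).mp hQ⟩, fun Q Q' hQ0 hQ hQ'0 hQ' => ?_⟩
  exact Submodule.exists_smul_eq_of_finrank_eq_one hker ((mem_ker_evalAt p Q).mpr hQ) hQ0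
    ((mem_ker_evalAt p Q').mpr hQ') hQ'0

/-- **Five points determine a conic.** Over an algebraically closed field, given five points
of the projective plane (represented by nonzero vectors in `k³`), no three of which are
collinear (i.e. any three of the representing vectors are linearly independent), there is a
nonzero quadratic form vanishing at all five points, and it is unique up to a nonzero
scalar. -/
theorem five_points_determine_a_conic
    (k : Type*) [Field k] [IsAlgClosed k]
    (p : Fin 5 → (Fin 3 → k)) (hp : ∀ i, p i ≠ 0)
    (hgen : ∀ i j l : Fin 5, i ≠ j → i ≠ l → j ≠ l →
      LinearIndependent k ![p i, p j, p l]) :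
    (∃ Q : QuadraticForm k (Fin 3 → k), Q ≠ 0 ∧ ∀ i, Q (p i) = 0) ∧
    (∀ Q Q' : QuadraticForm k (Fin 3 → k),
      Q ≠ 0 → (∀ i, Q (p i) = 0) → Q' ≠ 0 → (∀ i, Q' (p i) = 0) →
      ∃ c : k, c ≠ 0 ∧ Q' = c • Q) :=
  five_points_determine_a_conic_general k p hgen
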